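/- arXiv:1012.1786 — 7 statements merged into one kernel-verified Lean document; each statement's English description precedes it below -/
import Mathlib

section
/- Every smooth group homomorphism from ℂ* to ℂ* is of the form g ↦ |g|^(b+ic)·(g/|g|)^v for some real numbers b, c and integer v. -/
noncomputable section

open Complex Finset

/-- `g^μ` for `μ = (b + c·i, v) ∈ ℂ × ℤ`: `|g|^(b+ci) · (g/|g|)^v`. -/
noncomputable def cpw (b c : ℝ) (v : ℤ) (g : ℂ) : ℂ :=
  ((‖g‖ : ℂ) ^ ((b : ℂ) + (c : ℂ) * Complex.I)) * (g / (‖g‖ : ℂ)) ^ v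

/-- `g^μ` where `μ` is encoded as a triple `(b, c, v) : ℝ × ℝ × ℤ`. -/
noncomputable def cpwT (t : ℝ × ℝ × ℤ) (g : ℂ) : ℂ := cpw t.1 t.2.1 t.2.2 g

/-- The product `μ₂μ₁ = (b₁b₂, b₁c₂ + c₁v₂, v₁v₂)` in the ring `𝓡 ≅ ℂ × ℤ`. -/
def rmul (μ₂ μ₁ : ℝ × ℝ × ℤ) : ℝ × ℝ × ℤ :=
  (μ₁.1 * μ₂.1, μ₁.1 * μ₂.2.1 + μ₁.2.1 * (μ₂.2.2 : ℝ), μ₁.2.2 * μ₂.2.2)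

/-- The identity element of `𝓡`. -/
def rone : ℝ × ℝ × ℤ := (1, 0, 1)

/-- `⟨α, β⟩ = Σₖ αᵏ βᵏ ∈ 𝓡`. -/
def rinner {n : ℕ} (α β : Fin n → ℝ × ℝ × ℤ) : ℝ × ℝ × ℤ :=
  ∑ k, rmul (α k) (β k)

/-- `χ^α(g₁, …, gₙ) = ∏ₖ gₖ^{αᵏ}`. -/
noncomputable def chi {n : ℕ} (α : Fin n → ℝ × ℝ × ℤ) (g : Fin n → ℂ) : ℂ :=
  ∏ k, cpwT (α k) (g k)

open Manifold

/-!
Composing with the covering `exp : ℂ → ℂˣ` turns `f` into a differentiable `F : ℂ → ℂ` with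
`F (z + w) = F z * F w`. Such an `F` is `exp ∘ L` for the real-linear `L = DF(0)`: the product
`F · exp (-L)` is again multiplicative and has derivative `0` at the origin, hence everywhere, so it
is constant. Since `exp (2πi) = 1`, also `exp (L (2πi)) = 1`, which forces `L i ∈ iℤ`. Writing
`g = exp (log |g| + i arg g)` then gives the claimed form with `b + ic = L 1` and `v = L i / i`.
-/

theorem hasFDerivAt_of_map_add_eq_mul {𝕜 E 𝔸 : Type*} [NontriviallyNormedField 𝕜]
    [NormedAddCommGroup E] [NormedSpace 𝕜 E] [NormedRing 𝔸] [NormedAlgebra 𝕜 𝔸]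
    {f : E → 𝔸} {L : E →L[𝕜] 𝔸} (hadd : ∀ x y, f (x + y) = f x * f y)
    (hL : HasFDerivAt f L 0) (x : E) : HasFDerivAt f (f x • L) x := by
  have hL' : HasFDerivAt f L (x - x) := by rwa [sub_self]
  have hshift : HasFDerivAt (fun y => f (y - x)) L x := by
    have h := hL'.comp (f := (· - x)) x (hasFDerivAt_sub_const x)
    rwa [ContinuousLinearMap.comp_id] at h
  convert hshift.const_mul (f x) using 1
  funext y
  rw [← hadd, add_sub_cancel]

theorem eq_exp_of_map_add_eq_mul {E : Type*} [NormedAddCommGroup E] [NormedSpace ℝ E]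
    {f : E → ℂ} {L : E →L[ℝ] ℂ} (hadd : ∀ x y, f (x + y) = f x * f y) (h0 : f 0 = 1)
    (hL : HasFDerivAt f L 0) (x : E) : f x = exp (L x) := by
  set g : E → ℂ := fun x => f x * exp (-L x) with hg_def
  have hg_add : ∀ x y, g (x + y) = g x * g y := by
    intro x y
    simp only [hg_def, hadd, map_add, neg_add, exp_add]
    ring
  have hg_zero : HasFDerivAt (𝕜 := ℝ) g 0 0 := by
    have h := hL.mul (L.hasFDerivAt (x := 0)).neg.cexp
    simp only [h0, Pi.neg_apply, map_zero, neg_zero, exp_zero, one_smul, neg_add_cancel] at h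
    exact h
  have hg := hasFDerivAt_of_map_add_eq_mul hg_add hg_zero
  have hconst : g x = g 0 := is_const_of_fderiv_eq_zero (fun x => (hg x).differentiableAt)
    (fun x => (hg x).fderiv.trans (smul_zero (A := E →L[ℝ] ℂ) (g x))) x 0
  simp only [hg_def, h0, map_zero, neg_zero, exp_zero, mul_one] at hconst
  rwa [exp_neg, mul_inv_eq_one₀ (exp_ne_zero _)] at hconst

theorem ContinuousLinearMap.apply_eq_re_mul_add_im_mul (L : ℂ →L[ℝ] ℂ) (z : ℂ) :
    L z = z.re * L 1 + z.im * L I := by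
  have hz : z = z.re • (1 : ℂ) + z.im • I := by simp [real_smul, re_add_im]
  rw [hz, map_add, map_smul, map_smul, real_smul, real_smul]
  simp

theorem exists_int_apply_I_eq_of_exp_eq_one (L : ℂ →L[ℝ] ℂ)
    (h : exp (L (2 * Real.pi * I)) = 1) : ∃ v : ℤ, L I = v * I := by
  obtain ⟨v, hv⟩ := exp_eq_one_iff.1 h
  have hπ : ((2 * Real.pi : ℝ) : ℂ) ≠ 0 := ofReal_ne_zero.2 Real.two_pi_pos.ne'
  refine ⟨v, mul_left_cancel₀ hπ ?_⟩
  have hscale : L (2 * Real.pi * I) = ((2 * Real.pi : ℝ) : ℂ) * L I := by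
    rw [← real_smul, ← map_smul, real_smul, ofReal_mul, ofReal_ofNat]
  rw [← hscale, hv]
  push_cast
  ring

theorem cpw_eq_exp_log (b c : ℝ) (v : ℤ) {g : ℂ} (hg : g ≠ 0) :
    cpw b c v g = exp ((log g).re * (b + c * I) + (log g).im * (v * I)) := by
  have hnorm : (‖g‖ : ℂ) ≠ 0 := ofReal_ne_zero.2 (norm_ne_zero_iff.2 hg)
  have hphase : g / ‖g‖ = exp (arg g * I) := by
    rw [div_eq_iff hnorm, mul_comm]
    exact (norm_mul_exp_arg_mul_I g).symm
  rw [cpw, exp_add, cpow_def_of_ne_zero hnorm, ← ofReal_log (norm_nonneg _), hphase,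
    ← exp_int_mul, log_re, log_im]
  ring_nf

def expUnits (z : ℂ) : ℂˣ := Units.mk0 (exp z) (exp_ne_zero z)

@[simp]
theorem val_expUnits (z : ℂ) : (expUnits z : ℂ) = exp z := rfl

theorem expUnits_add (z w : ℂ) : expUnits (z + w) = expUnits z * expUnits w := by
  ext; simp [exp_add]

theorem expUnits_zero : expUnits 0 = 1 := by
  ext; simp

theorem expUnits_two_pi_mul_I : expUnits (2 * Real.pi * I) = 1 := by
  ext; simp [exp_two_pi_mul_I]

theorem expUnits_log (g : ℂˣ) : expUnits (log g) = g := by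
  ext; simp [exp_log g.ne_zero]

theorem contMDiff_expUnits {n : WithTop ℕ∞} : ContMDiff 𝓘(ℝ, ℂ) 𝓘(ℝ, ℂ) n expUnits := by
  apply ContMDiff.of_comp_isOpenEmbedding Units.isOpenEmbedding_val
  rw [contMDiff_iff_contDiff]
  exact contDiff_exp

theorem differentiable_val_comp_expUnits {φ : ℂˣ → ℂˣ}
    (hφ : MDifferentiable 𝓘(ℝ, ℂ) 𝓘(ℝ, ℂ) φ) : Differentiable ℝ (fun z => (φ (expUnits z) : ℂ)) :=
  mdifferentiable_iff_differentiable.1 <|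
    (Units.contMDiff_val (n := 1).mdifferentiable one_ne_zero).comp
      (hφ.comp (contMDiff_expUnits (n := 1).mdifferentiable one_ne_zero))

/-- every smooth group homomorphism `ℂ* → ℂ*` is of the form
`g ↦ |g|^(b+ic)·(g/|g|)^v` for some `b c : ℝ` and `v : ℤ`. -/
theorem every_smooth_endomorphism_eq_cpw (f : ℂˣ →* ℂˣ)
    (hf : ContMDiff 𝓘(ℝ, ℂ) 𝓘(ℝ, ℂ) (⊤ : ℕ∞) (fun g : ℂˣ => f g)) :
    ∃ (b c : ℝ) (v : ℤ), ∀ g : ℂˣ, ((f g : ℂˣ) : ℂ) = cpw b c v (g : ℂ) := by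
  set F : ℂ → ℂ := fun z => (f (expUnits z) : ℂ) with hF_def
  have hF_add : ∀ z w, F (z + w) = F z * F w := fun z w => by
    simp only [hF_def, expUnits_add, map_mul, Units.val_mul]
  have hF_diff : Differentiable ℝ F :=
    differentiable_val_comp_expUnits (hf.mdifferentiable (by simp))
  set L := fderiv ℝ F 0
  have hF : ∀ z, F z = exp (L z) :=
    eq_exp_of_map_add_eq_mul hF_add (by simp [hF_def, expUnits_zero]) (hF_diff 0).hasFDerivAt
  obtain ⟨v, hv⟩ := exists_int_apply_I_eq_of_exp_eq_one L <| by
    simp [← hF, hF_def, expUnits_two_pi_mul_I]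
  refine ⟨(L 1).re, (L 1).im, v, fun g => ?_⟩
  rw [cpw_eq_exp_log _ _ _ g.ne_zero, re_add_im, ← hv, ← L.apply_eq_re_mul_add_im_mul, ← hF]
  simp only [hF_def, expUnits_log]
end
end

section
/- For μ = (b+ic, v) ∈ ℂ×ℤ, there exist integers p, q with g^μ = g^p·conj(g)^q for all g ∈ ℂ* if and only if c = 0 and b is an integer congruent to v modulo 2; in that case g^μ = g^((b+v)/2)·conj(g)^((b-v)/2). -/
noncomputable section

open Complex Finset

/-! Writing `g = ‖g‖ u` with `‖u‖ = 1`, one has `g ^ p * conj g ^ q = ‖g‖ ^ (p + q) * u ^ (p - q)`.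
On positive reals `t` this reads `t ^ (b + c i) = t ^ (p + q)`, and `t ↦ t ^ w` determines `w`,
so `c = 0` and `b = p + q`; at `g = -1` it reads `(-1) ^ v = (-1) ^ (p + q)`, so `v ≡ b` mod 2.
Conversely `p = (b + v) / 2`, `q = (b - v) / 2` solve `p + q = b`, `p - q = v`. -/

open ComplexConjugate

namespace Complex

lemma eq_zero_of_forall_exp_ofReal_mul_eq_one {w : ℂ} (h : ∀ s : ℝ, exp (s * w) = 1) :
    w = 0 := by
  obtain ⟨n, hn⟩ := exp_eq_one_iff.1 (by simpa using h 1)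
  rcases eq_or_ne n 0 with rfl | hn0
  · simpa using hn
  · -- `w = 2πin`, so `s = 1 / (2n)` gives `exp (s * w) = exp (πi) = -1`
    have h_half := h (1 / (2 * n))
    rw [hn, show ((1 / (2 * n) : ℝ) : ℂ) * (n * (2 * Real.pi * I)) = Real.pi * I by
      push_cast; field_simp, exp_pi_mul_I] at h_half
    norm_num at h_half

lemma eq_of_forall_ofReal_cpow_eq {w z : ℂ} (h : ∀ t : ℝ, 0 < t → (t : ℂ) ^ w = (t : ℂ) ^ z) :
    w = z := by
  refine sub_eq_zero.1 (eq_zero_of_forall_exp_ofReal_mul_eq_one fun s => ?_)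
  have hs := h (Real.exp s) (Real.exp_pos s)
  rw [cpow_def_of_ne_zero (ofReal_ne_zero.2 (Real.exp_pos s).ne'),
    cpow_def_of_ne_zero (ofReal_ne_zero.2 (Real.exp_pos s).ne'),
    ← ofReal_log (Real.exp_pos s).le, Real.log_exp] at hs
  rw [mul_sub, exp_sub, hs, div_self (exp_ne_zero _)]

lemma zpow_mul_conj_zpow {g : ℂ} (hg : g ≠ 0) (p q : ℤ) :
    g ^ p * conj g ^ q = (‖g‖ : ℂ) ^ (p + q) * (g / ‖g‖) ^ (p - q) := by
  have hr : (‖g‖ : ℂ) ≠ 0 := ofReal_ne_zero.2 (norm_ne_zero_iff.2 hg)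
  have hu : g / ‖g‖ ≠ 0 := div_ne_zero hg hr
  have hconj : conj (g / ‖g‖) = (g / ‖g‖)⁻¹ := (inv_eq_conj <| by
    rw [norm_div, norm_real, norm_norm, div_self (norm_ne_zero_iff.2 hg)]).symm
  have hg' : g = ‖g‖ * (g / ‖g‖) := (mul_div_cancel₀ g hr).symm
  conv_lhs => rw [hg', map_mul, conj_ofReal, hconj]
  rw [mul_zpow, mul_zpow, inv_zpow, zpow_add₀ hr, zpow_sub₀ hu]
  ring

end Complex

lemma two_dvd_sub_of_neg_one_zpow_eq {K : Type*} [DivisionRing K] [CharZero K] {m n : ℤ}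
    (h : (-1 : K) ^ m = (-1) ^ n) : 2 ∣ m - n := by
  rw [← Int.cast_negOnePow, ← Int.cast_negOnePow, Int.cast_inj, Units.val_inj,
    Int.negOnePow_eq_iff] at h
  exact even_iff_two_dvd.1 h

lemma cpw_ofReal_of_pos (b c : ℝ) (v : ℤ) {t : ℝ} (ht : 0 < t) :
    cpw b c v t = (t : ℂ) ^ ((b : ℂ) + c * I) := by
  rw [cpw, norm_real, Real.norm_of_nonneg ht.le, div_self (ofReal_ne_zero.2 ht.ne'), one_zpow,
    mul_one]

lemma cpw_neg_one (b c : ℝ) (v : ℤ) : cpw b c v (-1) = (-1) ^ v := by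
  simp [cpw]

lemma cpw_intCast_zero (k v : ℤ) (g : ℂ) : cpw k 0 v g = (‖g‖ : ℂ) ^ k * (g / ‖g‖) ^ v := by
  simp [cpw]

lemma cpw_intCast_zero_eq_zpow_mul_conj_zpow {k v : ℤ} (hkv : 2 ∣ k - v) {g : ℂ} (hg : g ≠ 0) :
    cpw k 0 v g = g ^ ((k + v) / 2) * conj g ^ ((k - v) / 2) := by
  rw [cpw_intCast_zero, Complex.zpow_mul_conj_zpow hg]
  congr 2 <;> omega

/-- `g^μ = g^p · conj(g)^q` for some integers `p, q` and all `g ∈ ℂ*` iff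
`c = 0` and `b` is an integer congruent to `v` mod `2`; in that case
`g^μ = g^((b+v)/2) · conj(g)^((b-v)/2)`. -/
theorem cpw_eq_pow_mul_conj_pow_iff (b c : ℝ) (v : ℤ) :
    ((∃ p q : ℤ, ∀ g : ℂ, g ≠ 0 → cpw b c v g = g ^ p * ((starRingEnd ℂ) g) ^ q) ↔
      (c = 0 ∧ ∃ k : ℤ, (b : ℝ) = (k : ℝ) ∧ (2 : ℤ) ∣ (k - v))) ∧
    (∀ k : ℤ, c = 0 → (b : ℝ) = (k : ℝ) → (2 : ℤ) ∣ (k - v) →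
      ∀ g : ℂ, g ≠ 0 →
        cpw b c v g = g ^ ((k + v) / 2) * ((starRingEnd ℂ) g) ^ ((k - v) / 2)) := by
  have h_suff (k : ℤ) (hc : c = 0) (hb : b = k) (hkv : 2 ∣ k - v) (g : ℂ) (hg : g ≠ 0) :
      cpw b c v g = g ^ ((k + v) / 2) * conj g ^ ((k - v) / 2) := by
    rw [hc, hb]
    exact cpw_intCast_zero_eq_zpow_mul_conj_zpow hkv hg
  refine ⟨⟨fun ⟨p, q, h⟩ => ?_, fun ⟨hc, k, hb, hkv⟩ => ⟨_, _, h_suff k hc hb hkv⟩⟩, h_suff⟩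
  have hexp : (b : ℂ) + c * I = ((p + q : ℤ) : ℂ) := eq_of_forall_ofReal_cpow_eq fun t ht => by
    rw [← cpw_ofReal_of_pos b c v ht, h t (ofReal_ne_zero.2 ht.ne'), conj_ofReal,
      ← zpow_add₀ (ofReal_ne_zero.2 ht.ne'), cpow_intCast]
  have hv : (-1 : ℂ) ^ v = (-1) ^ (p + q) := by
    rw [← cpw_neg_one b c, h _ (by norm_num), map_neg, map_one, zpow_add₀ (by norm_num)]
  refine ⟨by simpa using congrArg im hexp, p + q, by simpa using congrArg re hexp,
    two_dvd_sub_of_neg_one_zpow_eq hv.symm⟩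
end
end

section
/- Let β₁,…,βₙ ∈ 𝓡ⁿ, written βᵢ = (bᵢ + i·cᵢ, vᵢ) ∈ ℂⁿ×ℤⁿ. If {bᵢ} is a basis of ℝⁿ and {vᵢ} is a basis of the ℤ-module ℤⁿ, then there exist α₁,…,αₙ ∈ 𝓡ⁿ with ⟨αᵢ, βⱼ⟩ = δᵢⱼ·1 in 𝓡 for all i, j. -/
noncomputable section

open Complex Finset

/-!
Writing an element of `𝓡` as the lower triangular matrix `[[b, 0], [c, v]]`, a family `α` of
vectors in `𝓡ⁿ` is encoded by three coordinate matrices `B, C, V`; with `Bᵦ, Cᵦ, Vᵦ` those of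
`β`, `⟨αᵢ, βⱼ⟩` has coordinates `(B Bᵦᵀ, C Bᵦᵀ + V Cᵦᵀ, V Vᵦᵀ)`. So `α` is dual to `β` as soon
as `B = (Bᵦᵀ)⁻¹`, `V = (Vᵦᵀ)⁻¹` (an integer matrix because `det Vᵦ` is a unit) and
`C = -V Cᵦᵀ B`.
-/

open Matrix

section CoordinateMatrices

variable {ι κ : Type*} {n : ℕ}

def bMatrix (β : ι → κ → ℝ × ℝ × ℤ) : Matrix ι κ ℝ := of fun i k => (β i k).1

def cMatrix (β : ι → κ → ℝ × ℝ × ℤ) : Matrix ι κ ℝ := of fun i k => (β i k).2.1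

def vMatrix (β : ι → κ → ℝ × ℝ × ℤ) : Matrix ι κ ℤ := of fun i k => (β i k).2.2

def ofCoordinateMatrices (B C : Matrix ι κ ℝ) (V : Matrix ι κ ℤ) : ι → κ → ℝ × ℝ × ℤ :=
  fun i k => (B i k, C i k, V i k)

@[simp]
lemma cMatrix_ofCoordinateMatrices (B C : Matrix ι κ ℝ) (V : Matrix ι κ ℤ) :
    cMatrix (ofCoordinateMatrices B C V) = C := rfl

@[simp]
lemma vMatrix_ofCoordinateMatrices (B C : Matrix ι κ ℝ) (V : Matrix ι κ ℤ) :
    vMatrix (ofCoordinateMatrices B C V) = V := rfl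

variable (α : ι → Fin n → ℝ × ℝ × ℤ) (β : κ → Fin n → ℝ × ℝ × ℤ) (i : ι) (j : κ)

lemma rinner_fst : (rinner (α i) (β j)).1 = (bMatrix α * (bMatrix β)ᵀ) i j := by
  simp only [rinner, rmul, Prod.fst_sum, mul_apply, transpose_apply, bMatrix, of_apply]
  exact sum_congr rfl fun k _ => mul_comm _ _

lemma rinner_snd_fst : (rinner (α i) (β j)).2.1 =
    (cMatrix α * (bMatrix β)ᵀ + (vMatrix α).map (Int.cast : ℤ → ℝ) * (cMatrix β)ᵀ) i j := by
  simp only [rinner, rmul, Prod.snd_sum, Prod.fst_sum, Matrix.add_apply, mul_apply, transpose_apply,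
    map_apply, bMatrix, cMatrix, vMatrix, of_apply, ← sum_add_distrib]
  exact sum_congr rfl fun k _ => by ring

lemma rinner_snd_snd : (rinner (α i) (β j)).2.2 = (vMatrix α * (vMatrix β)ᵀ) i j := by
  simp only [rinner, rmul, Prod.snd_sum, mul_apply, transpose_apply, vMatrix, of_apply]
  exact sum_congr rfl fun k _ => mul_comm _ _

end CoordinateMatrices

lemma rinner_eq_ite_of_coordinateMatrices {ι : Type*} [DecidableEq ι] {n : ℕ}
    (α β : ι → Fin n → ℝ × ℝ × ℤ) (hb : bMatrix α * (bMatrix β)ᵀ = 1)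
    (hc : cMatrix α * (bMatrix β)ᵀ + (vMatrix α).map (Int.cast : ℤ → ℝ) * (cMatrix β)ᵀ = 0)
    (hv : vMatrix α * (vMatrix β)ᵀ = 1) (i j : ι) :
    rinner (α i) (β j) = if i = j then rone else 0 := by
  ext
  · rw [rinner_fst, hb, one_apply]
    split_ifs <;> rfl
  · rw [rinner_snd_fst, hc, Matrix.zero_apply]
    split_ifs <;> rfl
  · rw [rinner_snd_snd, hv, one_apply]
    split_ifs <;> rfl

/-- if `β₁,…,βₙ ∈ 𝓡ⁿ` with `βᵢ = (bᵢ + i·cᵢ, vᵢ)` are such that `{bᵢ}` is a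
basis of `ℝⁿ` (nonzero determinant) and `{vᵢ}` is a `ℤ`-basis of `ℤⁿ` (determinant a unit),
then `{βᵢ}` admits a dual set `{αᵢ}`: `⟨αᵢ,βⱼ⟩ = δᵢⱼ·1`. -/
theorem exists_dual_set (n : ℕ) (β : Fin n → Fin n → ℝ × ℝ × ℤ)
    (hb : (Matrix.of fun i k => (β i k).1).det ≠ 0)
    (hv : IsUnit (Matrix.of fun i k => (β i k).2.2).det) :
    ∃ α : Fin n → Fin n → ℝ × ℝ × ℤ,
      ∀ i j, rinner (α i) (β j) = if i = j then rone else 0 := by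
  have hBu : IsUnit (bMatrix β)ᵀ.det := by
    rw [det_transpose]
    exact hb.isUnit
  have hVu : IsUnit (vMatrix β)ᵀ.det := by
    rwa [det_transpose]
  set B := (bMatrix β)ᵀ⁻¹
  set V := (vMatrix β)ᵀ⁻¹
  refine ⟨ofCoordinateMatrices B (-(V.map (Int.cast : ℤ → ℝ) * (cMatrix β)ᵀ * B)) V,
    rinner_eq_ite_of_coordinateMatrices _ _ ?_ ?_ ?_⟩
  · exact nonsing_inv_mul _ hBu
  · rw [cMatrix_ofCoordinateMatrices, vMatrix_ofCoordinateMatrices, neg_mul,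
      Matrix.mul_assoc, nonsing_inv_mul _ hBu, Matrix.mul_one, neg_add_cancel]
  · exact nonsing_inv_mul _ hVu
end
end

section
/- Let Δ = (Σ, β) be a complete non-singular topological fan of dimension n with vertex set [m], let U(Σ) = ⋃_{I∈Σ} U(I) ⊆ ℂᵐ where U(I) = {z ∈ ℂᵐ : zᵢ ≠ 0 for all i ∉ I}, and let λ(h) = ∏ₖ λ_{βₖ}(hₖ). For each I ∈ Σ with |I| = n, the map φ̃_I : U(I) → ℂᴵ given by φ̃_I(z)ᵢ = ∏ₖ zₖ^{⟨αᵢᴵ, βₖ⟩} (i ∈ I) is invariant under the action of Ker λ, and the induced map U(I)/Ker λ → ℂᴵ is a bijection (indeed a homeomorphism). -/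
noncomputable section

open Complex Finset

/-- The cone spanned by the vectors `b i`, `i ∈ I`. -/
def coneOf {n : ℕ} (m : ℕ) (b : Fin m → (Fin n → ℝ)) (I : Finset (Fin m)) :
    Set (Fin n → ℝ) :=
  {x | ∃ r : Fin m → ℝ, (∀ i, 0 ≤ r i) ∧ (∀ i ∉ I, r i = 0) ∧ x = ∑ i, r i • b i}

/-- A complete non-singular (simplicial) topological fan of dimension `n` on the vertex set
`[m]`: an abstract simplicial complex `cx` on `Fin m` together with
`β : Fin m → 𝓡ⁿ = ℂⁿ × ℤⁿ`, `β i = (bᵢ + i·cᵢ, vᵢ)` (encoded componentwise by triples in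
`ℝ × ℝ × ℤ`), such that the cones `∠b_I`, `I ∈ cx`, form a complete ordinary simplicial fan
and each `{vᵢ}_{i ∈ I}` is part of a `ℤ`-basis of `ℤⁿ` (rows of a unimodular matrix). -/
structure CompleteNonsingularTopFan (n m : ℕ) where
  cx : Finset (Finset (Fin m))
  β : Fin m → Fin n → ℝ × ℝ × ℤ
  down_closed : ∀ I ∈ cx, ∀ J ⊆ I, J ∈ cx
  vertices : ∀ i : Fin m, {i} ∈ cx
  indep : ∀ I ∈ cx, LinearIndependent ℝ (fun i : I => fun k => (β i k).1)
  cone_inter : ∀ I ∈ cx, ∀ J ∈ cx,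
    coneOf m (fun i k => (β i k).1) I ∩ coneOf m (fun i k => (β i k).1) J =
      coneOf m (fun i k => (β i k).1) (I ∩ J)
  complete : (⋃ I ∈ cx, coneOf m (fun i k => (β i k).1) I) = Set.univ
  nonsingular : ∀ I ∈ cx, ∃ (C : Matrix (Fin n) (Fin n) ℤ) (ρ : Fin m → Fin n),
    IsUnit C.det ∧ Set.InjOn ρ (I : Set (Fin m)) ∧ ∀ i ∈ I, ∀ k, C (ρ i) k = (β i k).2.2

/-- The homomorphism `λ : (ℂ*)ᵐ → (ℂ*)ⁿ`, `λ(h₁,…,hₘ) = ∏ₖ λ_{βₖ}(hₖ)`, written on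
`j`-th coordinates: `λ(h)ⱼ = ∏ₖ hₖ^{βₖʲ}`. -/
noncomputable def lamMap {n m : ℕ} (β : Fin m → Fin n → ℝ × ℝ × ℤ) (h : Fin m → ℂ) :
    Fin n → ℂ :=
  fun j => ∏ k, cpwT (β k j) (h k)

/-- The open set `U(I) = {z ∈ ℂᵐ : zₖ ≠ 0 for k ∉ I}`. -/
def USet {m : ℕ} (I : Finset (Fin m)) : Set (Fin m → ℂ) := {z | ∀ k ∉ I, z k ≠ 0}

/-- The map `φ̃_I : U(I) → ℂᴵ`, `φ̃_I(z)ᵢ = ∏ₖ zₖ^{⟨αᵢᴵ,βₖ⟩}`. -/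
noncomputable def phiMap {n m : ℕ} (β αI : Fin m → Fin n → ℝ × ℝ × ℤ)
    (I : Finset (Fin m)) (z : Fin m → ℂ) : {i // i ∈ I} → ℂ :=
  fun i => ∏ k, cpwT (rinner (αI i.1) (β k)) (z k)


/-! In logarithmic coordinates `g = exp w` the power `g ↦ g^μ` becomes the `ℝ`-linear map
`rToEnd μ` of `ℂ`, and `rToEnd` turns the product of `𝓡` into composition. The duality
`⟨αᵢᴵ, βᵢ'⟩ = δᵢᵢ'` therefore says that two square matrices over the stably finite ring
`End_ℝ ℂ` are one-sided inverses, hence two-sided ones, so a point `x` of the torus is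
recovered from the values `χ^{αᵢᴵ}(x)`. As `φ̃_I(h)ᵢ = χ^{αᵢᴵ}(λ h)` on the torus, `Ker λ` is
exactly the set of `h` with `φ̃_I(h) = 1`.

On `U(I)` one has `φ̃_I(z)ᵢ = zᵢ · Pᵢ(z)` with `Pᵢ = phiOuter i` nonvanishing and depending
only on the coordinates outside `I`. Solving for the `zᵢ` gives continuous sections of `φ̃_I`
through every point, hence surjectivity and openness; together with
`φ̃_I(hz) = φ̃_I(h) φ̃_I(z)` they also identify the fibres with the `Ker λ`-orbits. -/

lemma isOpen_image_of_forall_exists_section {X Y : Type*} [TopologicalSpace X]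
    [TopologicalSpace Y] {f : X → Y} {s : Set X} (hs : IsOpen s)
    (hsec : ∀ x ∈ s, ∃ σ : Y → X, ContinuousAt σ (f x) ∧ σ (f x) = x ∧
      Function.RightInverse σ f) :
    IsOpen (f '' s) := by
  rw [isOpen_iff_mem_nhds]
  rintro _ ⟨x, hx, rfl⟩
  obtain ⟨σ, hσ, hσx, hfσ⟩ := hsec x hx
  have hpre : σ ⁻¹' s ∈ nhds (f x) := hσ.preimage_mem_nhds (by rw [hσx]; exact hs.mem_nhds hx)
  filter_upwards [hpre] with y hy using ⟨σ y, hy, hfσ y⟩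

def rToEnd : ℝ × ℝ × ℤ →+ Module.End ℝ ℂ where
  toFun t :=
    { toFun := fun w => t.1 * w.re + (t.2.1 * w.re + t.2.2 * w.im) * I
      map_add' := fun w w' => by simp only [add_re, add_im, ofReal_add]; ring
      map_smul' := fun r w => by simp; ring }
  map_zero' := by ext; simp
  map_add' s t := by ext; simp; ring

lemma rToEnd_apply (t : ℝ × ℝ × ℤ) (w : ℂ) :
    rToEnd t w = t.1 * w.re + (t.2.1 * w.re + t.2.2 * w.im) * I := rfl

lemma rToEnd_rmul (s t : ℝ × ℝ × ℤ) : rToEnd (rmul s t) = rToEnd s * rToEnd t := by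
  ext; simp [rToEnd_apply, rmul]; ring

lemma rToEnd_rone : rToEnd rone = 1 := by
  ext; simp [rToEnd_apply, rone]

lemma cpwT_exp (t : ℝ × ℝ × ℤ) (w : ℂ) : cpwT t (exp w) = exp (rToEnd t w) := by
  have hnorm : ((‖exp w‖ : ℝ) : ℂ) = exp (w.re : ℂ) := by
    rw [norm_exp, ofReal_exp]
  have hphase : exp w / exp (w.re : ℂ) = exp (w.im * I) := by
    rw [← exp_sub]; congr 1; apply Complex.ext <;> simp
  rw [cpwT, cpw, hnorm, hphase, ← exp_int_mul, cpow_def_of_ne_zero (exp_ne_zero _),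
    log_exp (by simpa using Real.pi_pos) (by simpa using Real.pi_pos.le), ← exp_add, rToEnd_apply]
  ring_nf

lemma rToEnd_rinner_apply {n : ℕ} (α β : Fin n → ℝ × ℝ × ℤ) (w : ℂ) :
    rToEnd (rinner α β) w = ∑ l, rToEnd (α l) (rToEnd (β l) w) := by
  simp [rinner, map_sum, rToEnd_rmul]

lemma cpwT_ne_zero (t : ℝ × ℝ × ℤ) {g : ℂ} (hg : g ≠ 0) : cpwT t g ≠ 0 := by
  rw [← exp_log hg, cpwT_exp]
  exact exp_ne_zero _

lemma cpwT_mul (t : ℝ × ℝ × ℤ) {g h : ℂ} (hg : g ≠ 0) (hh : h ≠ 0) :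
    cpwT t (g * h) = cpwT t g * cpwT t h := by
  rw [← exp_log hg, ← exp_log hh, ← exp_add, cpwT_exp, cpwT_exp, cpwT_exp, map_add, exp_add]

lemma cpwT_one (t : ℝ × ℝ × ℤ) : cpwT t 1 = 1 := by
  rw [← exp_zero, cpwT_exp, map_zero, exp_zero]

lemma cpwT_zero (g : ℂ) : cpwT 0 g = 1 := by
  simp [cpwT, cpw]

lemma cpwT_rone (g : ℂ) : cpwT rone g = g := by
  rcases eq_or_ne g 0 with rfl | hg
  · simp [cpwT, cpw, rone]
  · rw [← exp_log hg, cpwT_exp, rToEnd_rone, Module.End.one_apply]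

lemma continuousAt_cpwT (t : ℝ × ℝ × ℤ) {g : ℂ} (hg : g ≠ 0) : ContinuousAt (cpwT t) g := by
  have hnorm : (‖g‖ : ℂ) ≠ 0 := ofReal_ne_zero.2 (norm_ne_zero_iff.2 hg)
  unfold cpwT cpw
  refine ContinuousAt.mul ?_ ?_
  · exact (continuousAt_ofReal_cpow_const _ _ (Or.inr (norm_ne_zero_iff.2 hg))).comp
      continuous_norm.continuousAt
  · exact (continuousAt_id.div (continuous_ofReal.comp continuous_norm).continuousAt
      hnorm).zpow₀ _ (Or.inl (div_ne_zero hg hnorm))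

lemma prod_cpwT_exp {ι : Type*} (s : Finset ι) (γ : ι → ℝ × ℝ × ℤ) (a : ι → ℂ) :
    ∏ k ∈ s, cpwT (γ k) (exp (a k)) = exp (∑ k ∈ s, rToEnd (γ k) (a k)) := by
  simp [cpwT_exp, exp_sum]

lemma exists_exp_eq {ι : Type*} {h : ι → ℂ} (hh : ∀ k, h k ≠ 0) :
    ∃ a : ι → ℂ, (fun k => exp (a k)) = h :=
  ⟨fun k => log (h k), funext fun k => exp_log (hh k)⟩

def IsDualSet {n m : ℕ} (β αI : Fin m → Fin n → ℝ × ℝ × ℤ) (I : Finset (Fin m)) : Prop :=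
  ∀ i ∈ I, ∀ i' ∈ I, rinner (αI i) (β i') = if i = i' then rone else 0

lemma sum_rToEnd_mul_rToEnd_of_dual {n m : ℕ} {β αI : Fin m → Fin n → ℝ × ℝ × ℤ}
    {I : Finset (Fin m)} (hcard : I.card = n) (hdual : IsDualSet β αI I)
    (j l : Fin n) :
    ∑ i ∈ I, rToEnd (β i j) * rToEnd (αI i l) = if j = l then 1 else 0 := by
  classical
  let A : Matrix I (Fin n) (Module.End ℝ ℂ) := Matrix.of fun i l => rToEnd (αI i l)
  let B : Matrix (Fin n) I (Module.End ℝ ℂ) := Matrix.of fun l i => rToEnd (β i l)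
  have hAB : A * B = 1 := by
    ext1 i i'
    have hentry : (A * B) i i' = rToEnd (rinner (αI i) (β i')) := by
      simp [A, B, Matrix.mul_apply, rinner, rToEnd_rmul]
    rw [hentry, hdual i i.2 i' i'.2, Matrix.one_apply]
    simp [apply_ite rToEnd, rToEnd_rone]
  have hBA := congrFun₂ ((Matrix.mul_eq_one_comm_of_card_eq _ _ _
    (by simp [hcard])).1 hAB) j l
  simpa [A, B, Matrix.mul_apply, Matrix.one_apply, Finset.sum_attach I
    (fun i => rToEnd (β i j) * rToEnd (αI i l))] using hBA

section Characters

variable {n m : ℕ}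

lemma chi_lamMap (α : Fin n → ℝ × ℝ × ℤ) (β : Fin m → Fin n → ℝ × ℝ × ℤ) {h : Fin m → ℂ}
    (hh : ∀ k, h k ≠ 0) : chi α (lamMap β h) = ∏ k, cpwT (rinner α (β k)) (h k) := by
  obtain ⟨a, rfl⟩ := exists_exp_eq hh
  simp only [chi, lamMap, prod_cpwT_exp, rToEnd_rinner_apply, map_sum]
  rw [Finset.sum_comm]

lemma prod_cpwT_chi {β αI : Fin m → Fin n → ℝ × ℝ × ℤ} {I : Finset (Fin m)}
    (hcard : I.card = n) (hdual : IsDualSet β αI I)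
    {x : Fin n → ℂ} (hx : ∀ j, x j ≠ 0) (j : Fin n) :
    ∏ i ∈ I, cpwT (β i j) (chi (αI i) x) = x j := by
  obtain ⟨a, rfl⟩ := exists_exp_eq hx
  simp only [chi, prod_cpwT_exp, map_sum]
  rw [Finset.sum_comm]
  simp only [← Module.End.mul_apply, ← LinearMap.sum_apply,
    sum_rToEnd_mul_rToEnd_of_dual hcard hdual]
  congr 1
  rw [Finset.sum_eq_single j (fun l _ hl => by simp [Ne.symm hl]) (by simp)]
  simp

end Characters

section Phi

variable {n m : ℕ} (β αI : Fin m → Fin n → ℝ × ℝ × ℤ) (I : Finset (Fin m))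

def phiOuter (i : Fin m) (z : Fin m → ℂ) : ℂ :=
  ∏ k ∈ Iᶜ, cpwT (rinner (αI i) (β k)) (z k)

def phiSection (z : Fin m → ℂ) (t : {i // i ∈ I} → ℂ) : Fin m → ℂ :=
  fun k => if hk : k ∈ I then t ⟨k, hk⟩ / phiOuter β αI I k z else z k

variable {β αI I}

lemma phiOuter_congr {z z' : Fin m → ℂ} (h : ∀ k ∉ I, z k = z' k) (i : Fin m) :
    phiOuter β αI I i z = phiOuter β αI I i z' :=
  Finset.prod_congr rfl fun k hk => by rw [h k (Finset.mem_compl.1 hk)]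

lemma phiOuter_ne_zero {z : Fin m → ℂ} (hz : z ∈ USet I) (i : Fin m) :
    phiOuter β αI I i z ≠ 0 :=
  Finset.prod_ne_zero_iff.2 fun k hk => cpwT_ne_zero _ (hz k (Finset.mem_compl.1 hk))

lemma phiOuter_mul {h z : Fin m → ℂ} (hh : h ∈ USet I) (hz : z ∈ USet I) (i : Fin m) :
    phiOuter β αI I i (h * z) = phiOuter β αI I i h * phiOuter β αI I i z := by
  rw [phiOuter, phiOuter, phiOuter, ← Finset.prod_mul_distrib]
  exact Finset.prod_congr rfl fun k hk =>
    cpwT_mul _ (hh k (Finset.mem_compl.1 hk)) (hz k (Finset.mem_compl.1 hk))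

lemma continuousOn_phiOuter (i : Fin m) : ContinuousOn (phiOuter β αI I i) (USet I) := by
  refine continuousOn_finsetProd _ fun k hk z hz => ?_
  exact ((continuousAt_cpwT _ (hz k (Finset.mem_compl.1 hk))).comp (x := z)
    (continuous_apply k).continuousAt).continuousWithinAt

lemma cpwT_rinner_of_mem (hdual : IsDualSet β αI I)
    {i k : Fin m} (hi : i ∈ I) (hk : k ∈ I) (g : ℂ) :
    cpwT (rinner (αI i) (β k)) g = if i = k then g else 1 := by
  rw [hdual i hi k hk]
  split_ifs
  · exact cpwT_rone g
  · exact cpwT_zero g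

lemma phiMap_apply (hdual : IsDualSet β αI I)
    (z : Fin m → ℂ) (i : {i // i ∈ I}) : phiMap β αI I z i = z i * phiOuter β αI I i z := by
  rw [phiMap, ← Finset.prod_mul_prod_compl I]
  congr 1
  rw [Finset.prod_congr rfl fun k hk => cpwT_rinner_of_mem hdual i.2 hk (z k),
    Finset.prod_ite_eq, if_pos i.2]

lemma phiMap_mul (hdual : IsDualSet β αI I)
    {h z : Fin m → ℂ} (hh : ∀ k, h k ≠ 0) (hz : z ∈ USet I) :
    phiMap β αI I (h * z) = phiMap β αI I h * phiMap β αI I z := by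
  funext i
  simp only [phiMap_apply hdual, Pi.mul_apply, phiOuter_mul (fun k _ => hh k) hz]
  ring

lemma continuousOn_phiMap (hdual : IsDualSet β αI I) :
    ContinuousOn (phiMap β αI I) (USet I) := by
  have hsplit : phiMap β αI I = fun z (i : {i // i ∈ I}) => z i * phiOuter β αI I i z :=
    funext fun z => funext (phiMap_apply hdual z)
  rw [hsplit]
  exact continuousOn_pi.2 fun i => (continuous_apply _).continuousOn.mul (continuousOn_phiOuter _)

lemma phiSection_apply_of_notMem {z : Fin m → ℂ} {t : {i // i ∈ I} → ℂ} {k : Fin m}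
    (hk : k ∉ I) : phiSection β αI I z t k = z k :=
  dif_neg hk

lemma phiSection_mem_USet {z : Fin m → ℂ} (hz : z ∈ USet I) (t : {i // i ∈ I} → ℂ) :
    phiSection β αI I z t ∈ USet I := fun k hk => by
  rw [phiSection_apply_of_notMem hk]
  exact hz k hk

lemma phiSection_ne_zero {z : Fin m → ℂ} (hz : z ∈ USet I) {t : {i // i ∈ I} → ℂ}
    (ht : ∀ i, t i ≠ 0) (k : Fin m) : phiSection β αI I z t k ≠ 0 := by
  by_cases hk : k ∈ I
  · rw [phiSection, dif_pos hk]
    exact div_ne_zero (ht _) (phiOuter_ne_zero hz k)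
  · rw [phiSection_apply_of_notMem hk]
    exact hz k hk

lemma phiSection_congr {z z' : Fin m → ℂ} (h : ∀ k ∉ I, z k = z' k) :
    phiSection β αI I z = phiSection β αI I z' := by
  funext t k
  by_cases hk : k ∈ I
  · simp only [phiSection, dif_pos hk, phiOuter_congr h]
  · rw [phiSection_apply_of_notMem hk, phiSection_apply_of_notMem hk, h k hk]

lemma continuous_phiSection (z : Fin m → ℂ) : Continuous (phiSection β αI I z) := by
  refine continuous_pi fun k => ?_
  by_cases hk : k ∈ I
  · simp only [phiSection, dif_pos hk]
    exact (continuous_apply _).div_const _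
  · simp only [phiSection, dif_neg hk]
    exact continuous_const

lemma phiMap_phiSection (hdual : IsDualSet β αI I)
    {z : Fin m → ℂ} (hz : z ∈ USet I) (t : {i // i ∈ I} → ℂ) :
    phiMap β αI I (phiSection β αI I z t) = t := by
  funext i
  rw [phiMap_apply hdual, phiOuter_congr (fun k hk => phiSection_apply_of_notMem hk),
    phiSection, dif_pos i.2, div_mul_cancel₀ _ (phiOuter_ne_zero hz i)]

lemma phiSection_phiMap (hdual : IsDualSet β αI I)
    {z : Fin m → ℂ} (hz : z ∈ USet I) : phiSection β αI I z (phiMap β αI I z) = z := by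
  funext k
  by_cases hk : k ∈ I
  · rw [phiSection, dif_pos hk, phiMap_apply hdual,
      mul_div_cancel_right₀ _ (phiOuter_ne_zero hz k)]
  · exact phiSection_apply_of_notMem hk

lemma eq_of_phiMap_eq (hdual : IsDualSet β αI I)
    {z z' : Fin m → ℂ} (hz : z ∈ USet I) (hz' : z' ∈ USet I) (hout : ∀ k ∉ I, z k = z' k)
    (h : phiMap β αI I z = phiMap β αI I z') : z = z' := by
  rw [← phiSection_phiMap hdual hz, ← phiSection_phiMap hdual hz', h, phiSection_congr hout]

end Phi

section Kernel

variable {n m : ℕ} {β αI : Fin m → Fin n → ℝ × ℝ × ℤ} {I : Finset (Fin m)}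

lemma chi_one (α : Fin n → ℝ × ℝ × ℤ) : chi α 1 = 1 :=
  Finset.prod_eq_one fun _ _ => cpwT_one _

lemma lamMap_ne_zero {h : Fin m → ℂ} (hh : ∀ k, h k ≠ 0) (j : Fin n) : lamMap β h j ≠ 0 :=
  Finset.prod_ne_zero_iff.2 fun k _ => cpwT_ne_zero _ (hh k)

lemma lamMap_eq_one_iff_phiMap_eq_one (hcard : I.card = n) (hdual : IsDualSet β αI I)
    {h : Fin m → ℂ} (hh : ∀ k, h k ≠ 0) : lamMap β h = 1 ↔ phiMap β αI I h = 1 := by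
  have hchi (i : {i // i ∈ I}) : phiMap β αI I h i = chi (αI i) (lamMap β h) :=
    (chi_lamMap _ _ hh).symm
  constructor
  · intro hker
    funext i
    rw [hchi, hker, chi_one, Pi.one_apply]
  · intro hphi
    funext j
    rw [← prod_cpwT_chi hcard hdual (lamMap_ne_zero hh) j, Pi.one_apply]
    exact Finset.prod_eq_one fun i hi => by rw [← hchi ⟨i, hi⟩, hphi, Pi.one_apply, cpwT_one]

lemma exists_lamMap_eq_one_of_phiMap_eq (hcard : I.card = n) (hdual : IsDualSet β αI I)
    {z w : Fin m → ℂ} (hz : z ∈ USet I) (hw : w ∈ USet I)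
    (hzw : phiMap β αI I z = phiMap β αI I w) :
    ∃ h : Fin m → ℂ, (∀ k, h k ≠ 0) ∧ lamMap β h = 1 ∧ w = h * z := by
  have hq : w / z ∈ USet I := fun k hk => div_ne_zero (hw k hk) (hz k hk)
  set h := phiSection β αI I (w / z) 1
  have hh : ∀ k, h k ≠ 0 := phiSection_ne_zero hq fun _ => one_ne_zero
  have hφh : phiMap β αI I h = 1 := phiMap_phiSection hdual hq 1
  refine ⟨h, hh, (lamMap_eq_one_iff_phiMap_eq_one hcard hdual hh).2 hφh, ?_⟩
  refine eq_of_phiMap_eq hdual hw (fun k hk => mul_ne_zero (hh k) (hz k hk)) (fun k hk => ?_) ?_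
  · show w k = phiSection β αI I (w / z) 1 k * z k
    rw [phiSection_apply_of_notMem hk, Pi.div_apply, div_mul_cancel₀ _ (hz k hk)]
  · rw [phiMap_mul hdual hh hz, hφh, one_mul, hzw]

end Kernel

theorem phi_invariant_and_induces_homeo_general (n m : ℕ) (Δ : CompleteNonsingularTopFan n m)
    (I : Finset (Fin m)) (hcard : I.card = n)
    (αI : Fin m → Fin n → ℝ × ℝ × ℤ)
    (hdual : ∀ i ∈ I, ∀ i' ∈ I, rinner (αI i) (Δ.β i') = if i = i' then rone else 0) :
    (∀ h : Fin m → ℂ, (∀ k, h k ≠ 0) → (lamMap Δ.β h = fun _ => 1) →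
      ∀ z ∈ USet I, phiMap Δ.β αI I (fun k => h k * z k) = phiMap Δ.β αI I z) ∧
    (∀ z ∈ USet I, ∀ w ∈ USet I,
      (phiMap Δ.β αI I z = phiMap Δ.β αI I w ↔
        ∃ h : Fin m → ℂ, (∀ k, h k ≠ 0) ∧ (lamMap Δ.β h = fun _ => 1) ∧
          ∀ k, w k = h k * z k)) ∧
    (∀ t : {i // i ∈ I} → ℂ, ∃ z ∈ USet I, phiMap Δ.β αI I z = t) ∧
    ContinuousOn (phiMap Δ.β αI I) (USet I) ∧
    (∀ s : Set (Fin m → ℂ), s ⊆ USet I → IsOpen s →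
      IsOpen (phiMap Δ.β αI I '' s)) := by
  have hinv (h : Fin m → ℂ) (hh : ∀ k, h k ≠ 0) (hker : lamMap Δ.β h = 1) (z : Fin m → ℂ)
      (hz : z ∈ USet I) : phiMap Δ.β αI I (h * z) = phiMap Δ.β αI I z := by
    rw [phiMap_mul hdual hh hz, (lamMap_eq_one_iff_phiMap_eq_one hcard hdual hh).1 hker, one_mul]
  have h1 : (1 : Fin m → ℂ) ∈ USet I := fun _ _ => one_ne_zero
  refine ⟨hinv, fun z hz w hw => ⟨fun hzw => ?_, ?_⟩,
    fun t => ⟨_, phiSection_mem_USet h1 t, phiMap_phiSection hdual h1 t⟩,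
    continuousOn_phiMap hdual, fun s hsU hs => isOpen_image_of_forall_exists_section hs ?_⟩
  · obtain ⟨h, hh, hker, rfl⟩ := exists_lamMap_eq_one_of_phiMap_eq hcard hdual hz hw hzw
    exact ⟨h, hh, hker, fun k => rfl⟩
  · rintro ⟨h, hh, hker, hwz⟩
    rw [show w = h * z from funext hwz, hinv h hh hker z hz]
  · intro z hz
    exact ⟨phiSection Δ.β αI I z, (continuous_phiSection z).continuousAt,
      phiSection_phiMap hdual (hsU hz), phiMap_phiSection hdual (hsU hz)⟩

/-- for `I ∈ Σ` with `|I| = n` and dual set `{αᵢᴵ}` of `{βᵢ}ᵢ∈I`, the map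
`φ̃_I : U(I) → ℂᴵ` is invariant under `Ker λ`, and it induces a bijection — indeed a
homeomorphism — `U(I)/Ker λ → ℂᴵ` (constancy exactly on `Ker λ`-orbits, surjectivity,
continuity, and openness on relatively open subsets of `U(I)`). -/
theorem phi_invariant_and_induces_homeo (n m : ℕ) (Δ : CompleteNonsingularTopFan n m)
    (I : Finset (Fin m)) (hI : I ∈ Δ.cx) (hcard : I.card = n)
    (αI : Fin m → Fin n → ℝ × ℝ × ℤ)
    (hdual : ∀ i ∈ I, ∀ i' ∈ I, rinner (αI i) (Δ.β i') = if i = i' then rone else 0) :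
    (∀ h : Fin m → ℂ, (∀ k, h k ≠ 0) → (lamMap Δ.β h = fun _ => 1) →
      ∀ z ∈ USet I, phiMap Δ.β αI I (fun k => h k * z k) = phiMap Δ.β αI I z) ∧
    (∀ z ∈ USet I, ∀ w ∈ USet I,
      (phiMap Δ.β αI I z = phiMap Δ.β αI I w ↔
        ∃ h : Fin m → ℂ, (∀ k, h k ≠ 0) ∧ (lamMap Δ.β h = fun _ => 1) ∧
          ∀ k, w k = h k * z k)) ∧
    (∀ t : {i // i ∈ I} → ℂ, ∃ z ∈ USet I, phiMap Δ.β αI I z = t) ∧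
    ContinuousOn (phiMap Δ.β αI I) (USet I) ∧
    (∀ s : Set (Fin m → ℂ), s ⊆ USet I → IsOpen s →
      IsOpen (phiMap Δ.β αI I '' s)) :=
  phi_invariant_and_induces_homeo_general n m Δ I hcard αI hdual
end
end

section
/- The quotient space X(Δ) = U(Σ)/Ker λ associated to a complete non-singular topological fan Δ is compact. -/
noncomputable section

open Complex Finset

/-- `U(Σ) = ⋃_{I ∈ Σ} U(I) ⊆ ℂᵐ`. -/
def USigma {n m : ℕ} (Δ : CompleteNonsingularTopFan n m) : Set (Fin m → ℂ) :=
  ⋃ I ∈ Δ.cx, {z : Fin m → ℂ | ∀ k ∉ I, z k ≠ 0}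

/-- The relation on `U(Σ)` identifying points in the same `Ker λ`-orbit; the quotient
`Quot (orbitRel Δ)` is the space `X(Δ) = U(Σ)/Ker λ` with the quotient topology. -/
def orbitRel {n m : ℕ} (Δ : CompleteNonsingularTopFan n m)
    (z w : USigma Δ) : Prop :=
  ∃ h : Fin m → ℂ, (∀ k, h k ≠ 0) ∧ (lamMap Δ.β h = fun _ => 1) ∧
    ∀ k, (w : Fin m → ℂ) k = h k * (z : Fin m → ℂ) k


/-!
Given `z ∈ U(Σ)` with zero set `S ∈ Σ`, we move `z` along its orbit by `h = exp (s + iθ) ∈ Ker λ`.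
For the moduli we need `∑ sₖ bₖ = 0` and `log |hₖ zₖ| ≤ 0`, with equality outside some `I ∈ Σ`
containing `S`; this says that `-∑ log |zₖ| bₖ` lies in `∠b_I + span {bₖ | k ∈ S}`. That holds
because if `p + Mσ`, `σ = ∑_{k ∈ S} bₖ`, lies in the closed cone `∠b_I` for infinitely many `M`,
then `σ ∈ ∠b_I`, which forces `S ⊆ I`. The phase `θ` is then solved for with the `ℤ`-basis
`{vₖ}` of a full-dimensional simplex. So every orbit meets one of the finitely many compact
polydisks `{|wₖ| ≤ 1, |wₖ| = 1 for k ∉ I}`, and `X(Δ)` is a continuous image of a compact set.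
-/

open Filter Topology

section Cone

variable {n m : ℕ} (b : Fin m → Fin n → ℝ)

lemma sum_smul_eq_sum_subtype {I : Finset (Fin m)} {r : Fin m → ℝ} (hr : ∀ i ∉ I, r i = 0) :
    ∑ i, r i • b i = ∑ i : I, r i • b i := by
  rw [Finset.sum_coe_sort I fun i => r i • b i]
  exact (Finset.sum_subset (Finset.subset_univ I) fun i _ hi => by simp [hr i hi]).symm

lemma coneOf_eq_image_linearCombination (I : Finset (Fin m)) :
    coneOf m b I = Fintype.linearCombination ℝ (fun i : I => b i) '' Set.Ici 0 := by
  classical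
  ext x
  constructor
  · rintro ⟨r, hr0, hrI, rfl⟩
    exact ⟨fun i => r i, fun i => hr0 i,
      by simp [Fintype.linearCombination_apply, sum_smul_eq_sum_subtype b hrI]⟩
  · rintro ⟨r, hr0, rfl⟩
    refine ⟨fun i => if h : i ∈ I then r ⟨i, h⟩ else 0, fun i => ?_, fun i hi => dif_neg hi, ?_⟩
    · dsimp only
      split_ifs
      exacts [hr0 _, le_rfl]
    · rw [sum_smul_eq_sum_subtype b fun i hi => dif_neg hi]
      simp [Fintype.linearCombination_apply]

lemma isClosed_coneOf {I : Finset (Fin m)} (hb : LinearIndependent ℝ fun i : I => b i) :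
    IsClosed (coneOf m b I) := by
  rw [coneOf_eq_image_linearCombination]
  exact (LinearMap.isClosedEmbedding_of_injective (𝕜 := ℝ)
    (LinearMap.ker_eq_bot.mpr hb.fintypeLinearCombination_injective)).isClosedMap _ isClosed_Ici

lemma smul_mem_coneOf {I : Finset (Fin m)} {x : Fin n → ℝ} (hx : x ∈ coneOf m b I) {t : ℝ}
    (ht : 0 ≤ t) : t • x ∈ coneOf m b I := by
  obtain ⟨r, hr0, hrI, rfl⟩ := hx
  exact ⟨t • r, fun i => mul_nonneg ht (hr0 i), fun i hi => by simp [hrI i hi],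
    by simp [Finset.smul_sum, smul_smul]⟩

lemma mem_coneOf_of_frequently {I : Finset (Fin m)} (hb : LinearIndependent ℝ fun i : I => b i)
    {p σ : Fin n → ℝ} (h : ∃ᶠ M : ℕ in atTop, p + (M : ℝ) • σ ∈ coneOf m b I) :
    σ ∈ coneOf m b I := by
  have hlim : Tendsto (fun M : ℕ => (M : ℝ)⁻¹ • p + σ) atTop (𝓝 σ) := by
    simpa using ((tendsto_inv_atTop_nhds_zero_nat (𝕜 := ℝ)).smul_const p).add_const σ
  refine (isClosed_coneOf b hb).mem_of_frequently_of_tendsto ?_ hlim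
  refine (h.and_eventually (eventually_ne_atTop 0)).mono fun M ⟨hM, hM0⟩ => ?_
  have := smul_mem_coneOf b hM (inv_nonneg.mpr M.cast_nonneg)
  rwa [smul_add, smul_smul, inv_mul_cancel₀ (Nat.cast_ne_zero.mpr hM0), one_smul] at this

lemma eq_zero_of_sum_smul_eq_zero {I : Finset (Fin m)}
    (hb : LinearIndependent ℝ fun i : I => b i) {r : Fin m → ℝ} (hrI : ∀ i ∉ I, r i = 0)
    (hr : ∑ i, r i • b i = 0) (i : Fin m) : r i = 0 := by
  by_cases hi : i ∈ I
  · rw [sum_smul_eq_sum_subtype b hrI] at hr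
    exact Fintype.linearIndependent_iff.mp hb (fun i : I => r i) hr ⟨i, hi⟩
  · exact hrI i hi

end Cone

lemma cpw_exp (b c : ℝ) (v : ℤ) (s θ : ℝ) :
    cpw b c v (Complex.exp (s + θ * I)) = Complex.exp ((s * b : ℝ) + (s * c + v * θ : ℝ) * I) := by
  have hnorm : ‖Complex.exp (s + θ * I)‖ = Real.exp s := by simp [Complex.norm_exp]
  have hmod : ((Real.exp s : ℝ) : ℂ) ^ ((b : ℂ) + c * I) = Complex.exp (s * (b + c * I)) := by
    rw [Complex.cpow_def_of_ne_zero (by exact_mod_cast (Real.exp_pos s).ne'),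
      ← Complex.ofReal_log (Real.exp_pos s).le, Real.log_exp, mul_comm]
  have harg : Complex.exp (s + θ * I) / ((Real.exp s : ℝ) : ℂ) = Complex.exp (θ * I) := by
    rw [Complex.ofReal_exp, ← Complex.exp_sub, add_sub_cancel_left]
  rw [cpw, hnorm, hmod, harg, ← Complex.exp_int_mul, ← Complex.exp_add]
  push_cast
  ring_nf

lemma lamMap_exp_eq_one {n m : ℕ} {β : Fin m → Fin n → ℝ × ℝ × ℤ} {s θ : Fin m → ℝ}
    (hb : ∀ j, ∑ k, s k * (β k j).1 = 0)
    (hc : ∀ j, ∑ k, (s k * (β k j).2.1 + (β k j).2.2 * θ k) = 0) :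
    lamMap β (fun k => Complex.exp (s k + θ k * I)) = fun _ => 1 := by
  funext j
  simp only [lamMap, cpwT, cpw_exp, ← Complex.exp_sum, ← Finset.sum_mul, Finset.sum_add_distrib,
    ← Complex.ofReal_sum, hb j, hc j]
  simp

/-- The closure of the image of `C_I` in the chart `U(I)/Ker λ ≅ ℂᴵ`. -/
def polydisk {m : ℕ} (I : Finset (Fin m)) : Set (Fin m → ℂ) :=
  Set.univ.pi fun k => if k ∈ I then Metric.closedBall 0 1 else Metric.sphere 0 1

lemma isCompact_polydisk {m : ℕ} (I : Finset (Fin m)) : IsCompact (polydisk I) :=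
  isCompact_univ_pi fun k => by
    split_ifs
    exacts [isCompact_closedBall 0 1, isCompact_sphere 0 1]

lemma compactSpace_quot_of_isCompact {X : Type*} [TopologicalSpace X] {r : X → X → Prop}
    {K : Set X} (hK : IsCompact K) (h : ∀ x, ∃ y ∈ K, Quot.mk r y = Quot.mk r x) :
    CompactSpace (Quot r) := by
  have : Quot.mk r '' K = Set.univ := Set.eq_univ_of_forall (Quot.ind h)
  exact ⟨this ▸ hK.image continuous_quot_mk⟩

namespace CompleteNonsingularTopFan

variable {n m : ℕ} (Δ : CompleteNonsingularTopFan n m)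

abbrev b : Fin m → Fin n → ℝ := fun k j => (Δ.β k j).1

abbrev v : Fin m → Fin n → ℝ := fun k j => ((Δ.β k j).2.2 : ℝ)

lemma sum_ite_smul_b (S : Finset (Fin m)) (t : ℝ) :
    ∑ k, (if k ∈ S then t else 0) • Δ.b k = t • ∑ k ∈ S, Δ.b k := by
  simp [ite_smul, Finset.sum_ite_mem, Finset.smul_sum]

lemma subset_of_sum_mem_coneOf {S I : Finset (Fin m)} (hS : S ∈ Δ.cx) (hI : I ∈ Δ.cx)
    (h : ∑ k ∈ S, Δ.b k ∈ coneOf m Δ.b I) : S ⊆ I := by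
  classical
  set e : Fin m → ℝ := fun k => if k ∈ S then 1 else 0
  have he : ∑ k, e k • Δ.b k = ∑ k ∈ S, Δ.b k := (Δ.sum_ite_smul_b S 1).trans (one_smul ℝ _)
  have hmem : ∑ k ∈ S, Δ.b k ∈ coneOf m Δ.b (I ∩ S) := by
    rw [← Δ.cone_inter I hI S hS]
    exact ⟨h, e, fun k => by positivity, fun k hk => if_neg hk, he.symm⟩
  obtain ⟨r, -, hrIS, hr⟩ := hmem
  -- `b_S` is independent, so `r` must equal the all-ones coefficients `e` of `σ` on `S`.
  intro k hk
  by_contra hkI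
  have := eq_zero_of_sum_smul_eq_zero Δ.b (Δ.indep S hS) (r := e - r)
    (fun i hi => by simp [e, hi, hrIS i (by simp [hi])])
    (by simp [sub_smul, Finset.sum_sub_distrib, he, hr]) k
  simp [e, hk, hrIS k (by simp [hkI])] at this

/-- The cones of the star of `S` cover `ℝⁿ` modulo `span {bₖ | k ∈ S}`. -/
lemma exists_star_decomposition {S : Finset (Fin m)} (hS : S ∈ Δ.cx) (p : Fin n → ℝ) :
    ∃ I ∈ Δ.cx, S ⊆ I ∧ ∃ r : Fin m → ℝ, (∀ k ∉ S, 0 ≤ r k) ∧ (∀ k ∉ I, r k = 0) ∧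
      p = ∑ k, r k • Δ.b k := by
  classical
  set σ := ∑ k ∈ S, Δ.b k
  have hcover : ∀ M : ℕ, ∃ I ∈ Δ.cx, p + (M : ℝ) • σ ∈ coneOf m Δ.b I := fun M => by
    simpa using Δ.complete.ge (Set.mem_univ (p + (M : ℝ) • σ))
  obtain ⟨I, hI, hfreq⟩ := Δ.cx.frequently_exists.mp (Frequently.of_forall (f := atTop) hcover)
  have hSI : S ⊆ I :=
    Δ.subset_of_sum_mem_coneOf hS hI (mem_coneOf_of_frequently Δ.b (Δ.indep I hI) hfreq)
  obtain ⟨M, r, hr0, hrI, hr⟩ := hfreq.exists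
  refine ⟨I, hI, hSI, fun k => r k - if k ∈ S then (M : ℝ) else 0, fun k hk => ?_,
    fun k hk => ?_, ?_⟩
  · simpa [hk] using hr0 k
  · simp [hrI k hk, show k ∉ S from fun hkS => hk (hSI hkS)]
  · simp only [sub_smul, Finset.sum_sub_distrib, Δ.sum_ite_smul_b, ← hr]
    abel

lemma exists_card_eq : ∃ I ∈ Δ.cx, I.card = n := by
  let p : Δ.cx → Subspace ℝ (Fin n → ℝ) := fun I =>
    Submodule.span ℝ (Set.range fun i : I.1 => Δ.b i)
  have hcover : ⋃ I, (p I : Set (Fin n → ℝ)) = Set.univ := by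
    refine Set.eq_univ_of_forall fun x => ?_
    obtain ⟨I, hI, r, -, hrI, rfl⟩ := Set.mem_iUnion₂.mp (Δ.complete.ge (Set.mem_univ x))
    refine Set.mem_iUnion.mpr ⟨⟨I, hI⟩, ?_⟩
    rw [sum_smul_eq_sum_subtype _ hrI]
    exact Submodule.sum_mem _ fun i _ => Submodule.smul_mem _ _ (Submodule.subset_span ⟨i, rfl⟩)
  obtain ⟨I, hItop⟩ := Subspace.exists_eq_top_of_iUnion_eq_univ hcover
  refine ⟨I.1, I.2, ?_⟩
  have := Module.finrank_eq_card_basis (Module.Basis.mk (Δ.indep I.1 I.2) hItop.ge)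
  simpa using this.symm

lemma span_v_eq_top : Submodule.span ℝ (Set.range Δ.v) = ⊤ := by
  obtain ⟨I, hI, hcard⟩ := Δ.exists_card_eq
  obtain ⟨C, ρ, hdet, hinj, hCρ⟩ := Δ.nonsingular I hI
  let A : Matrix (Fin n) (Fin n) ℝ := (Int.castRingHom ℝ).mapMatrix C
  have hA : IsUnit A := by
    rw [Matrix.isUnit_iff_isUnit_det, ← RingHom.map_det]
    exact hdet.map _
  have hrows : Submodule.span ℝ (Set.range fun p => A p) = ⊤ :=
    (Matrix.linearIndependent_rows_of_isUnit hA).span_eq_top_of_card_eq_finrank' (by simp)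
  rw [eq_top_iff, ← hrows]
  refine Submodule.span_mono ?_
  rintro _ ⟨p, rfl⟩
  obtain ⟨k, hk, rfl⟩ := Finset.surjOn_of_injOn_of_card_le ρ (t := Finset.univ)
    (fun _ _ => Finset.mem_univ _) hinj (by simp [hcard]) (Finset.mem_univ p)
  exact ⟨k, funext fun j => by simp [A, hCρ k hk j]⟩

lemma exists_sum_v_mul_eq (u : Fin n → ℝ) : ∃ θ : Fin m → ℝ, ∀ j, ∑ k, Δ.v k j * θ k = u j := by
  obtain ⟨θ, hθ⟩ :=
    (Submodule.mem_span_range_iff_exists_fun ℝ).mp (Δ.span_v_eq_top.ge trivial : u ∈ _)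
  exact ⟨θ, fun j => by simpa [mul_comm] using congrFun hθ j⟩

lemma polydisk_subset_USigma {I : Finset (Fin m)} (hI : I ∈ Δ.cx) : polydisk I ⊆ USigma Δ :=
  fun w hw => Set.mem_biUnion hI fun k hk => by
    have hwk : w k ∈ Metric.sphere 0 1 := by simpa [hk] using hw k (Set.mem_univ k)
    simpa using Metric.ne_of_mem_sphere hwk one_ne_zero

lemma exists_moduli_shift {z : Fin m → ℂ} (hz : z ∈ USigma Δ) :
    ∃ I ∈ Δ.cx, ∃ s : Fin m → ℝ, ∑ k, s k • Δ.b k = 0 ∧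
      (∀ k, Real.exp (s k) * ‖z k‖ ≤ 1) ∧ ∀ k ∉ I, Real.exp (s k) * ‖z k‖ = 1 := by
  classical
  obtain ⟨I₀, hI₀, hz₀⟩ := Set.mem_iUnion₂.mp hz
  set S := Finset.univ.filter fun k => z k = 0
  have hS : S ∈ Δ.cx := Δ.down_closed I₀ hI₀ S fun k hk => by
    by_contra hkI₀
    exact hz₀ k hkI₀ (Finset.mem_filter.mp hk).2
  obtain ⟨I, hI, hSI, r, hr0, hrI, hp⟩ :=
    Δ.exists_star_decomposition hS (-∑ k, Real.log ‖z k‖ • Δ.b k)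
  have hexp : ∀ k ∉ S, Real.exp (-r k - Real.log ‖z k‖) * ‖z k‖ = Real.exp (-r k) := by
    intro k hk
    have hzk : 0 < ‖z k‖ := norm_pos_iff.mpr (by simpa [S] using hk)
    rw [Real.exp_sub, Real.exp_log hzk, div_mul_cancel₀ _ hzk.ne']
  refine ⟨I, hI, fun k => -r k - Real.log ‖z k‖, ?_, fun k => ?_, fun k hk => ?_⟩
  · simp only [sub_smul, neg_smul, Finset.sum_sub_distrib, Finset.sum_neg_distrib, ← hp]
    abel
  · by_cases hk : k ∈ S
    · simp [(Finset.mem_filter.mp hk).2]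
    · rw [hexp k hk, Real.exp_le_one_iff, neg_nonpos]
      exact hr0 k hk
  · rw [hexp k fun hkS => hk (hSI hkS), hrI k hk, neg_zero, Real.exp_zero]

lemma exists_ker_mul_mem_polydisk {z : Fin m → ℂ} (hz : z ∈ USigma Δ) :
    ∃ I ∈ Δ.cx, ∃ h : Fin m → ℂ, (∀ k, h k ≠ 0) ∧ lamMap Δ.β h = (fun _ => 1) ∧
      (fun k => h k * z k) ∈ polydisk I := by
  obtain ⟨I, hI, s, hs, hle, heq⟩ := Δ.exists_moduli_shift hz
  obtain ⟨θ, hθ⟩ := Δ.exists_sum_v_mul_eq fun j => -∑ k, s k * (Δ.β k j).2.1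
  have hb : ∀ j, ∑ k, s k * (Δ.β k j).1 = 0 := fun j => by
    simpa using congrFun hs j
  have hc : ∀ j, ∑ k, (s k * (Δ.β k j).2.1 + (Δ.β k j).2.2 * θ k) = 0 := fun j => by
    rw [Finset.sum_add_distrib, hθ j, add_neg_cancel]
  refine ⟨I, hI, _, fun k => Complex.exp_ne_zero _, lamMap_exp_eq_one hb hc, fun k _ => ?_⟩
  have hnorm : ‖Complex.exp (s k + θ k * Complex.I)‖ = Real.exp (s k) := by
    simp [Complex.norm_exp]
  by_cases hk : k ∈ I
  · simpa [hk, hnorm] using hle k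
  · simpa [hk, hnorm] using heq k hk

end CompleteNonsingularTopFan

/-- the quotient space `X(Δ) = U(Σ)/Ker λ` associated to a complete
non-singular topological fan `Δ` is compact. -/
theorem XDelta_compact (n m : ℕ) (Δ : CompleteNonsingularTopFan n m) :
    CompactSpace (Quot (orbitRel Δ)) := by
  set K := ⋃ I ∈ Δ.cx, polydisk I
  have hKU : K ⊆ USigma Δ := Set.iUnion₂_subset fun I hI => Δ.polydisk_subset_USigma hI
  have hK : IsCompact (Subtype.val ⁻¹' K : Set (USigma Δ)) :=
    (Topology.IsInducing.subtypeVal.isCompact_preimage_iff (by simpa using hKU)).mpr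
      (Δ.cx.finite_toSet.isCompact_biUnion fun I _ => isCompact_polydisk I)
  refine compactSpace_quot_of_isCompact hK fun ⟨z, hz⟩ => ?_
  obtain ⟨I, hI, h, h0, hker, hmem⟩ := Δ.exists_ker_mul_mem_polydisk hz
  have hwK : (fun k => h k * z k) ∈ K := Set.mem_biUnion hI hmem
  exact ⟨⟨_, hKU hwK⟩, hwK, (Quot.sound ⟨h, h0, hker, fun _ => rfl⟩).symm⟩
end
end

section
/- There is no function v from the 8 vertices {e₁,e₂,e₃,e₄,d₁,d₂,d₃,d₄} of the Barnette sphere to ℤ⁴ with v(eᵢ) the i-th standard basis vector, such that for every 3-simplex {p₁,p₂,p₃,p₄} of the Barnette sphere, det[v(p₁),v(p₂),v(p₃),v(p₄)] = ±1, and for any two 3-simplices sharing a common 2-face, the corresponding determinants (in the orientations induced by a fixed orientation of the sphere) have opposite signs. Equivalently: the system of equations dᵢᵢ = −1 (i=1..4); dᵢⱼdⱼᵢ = 0 for (i,j) ∈ {(1,2),(2,3),(3,1)}; dⱼ₄ + dᵢ₄dⱼᵢ = −1 and dⱼᵢ + dⱼ₄d₄ᵢ = −1 for (i,j) ∈ {(1,2),(2,3),(3,1)};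 dᵢⱼ − dₖⱼ − d₄ⱼ − dᵢⱼdₖ₄d₄ₖ = 1 for (i,j,k) ∈ {(1,2,3),(2,3,1),(3,1,2)}; and d₁₃d₃₂d₂₁ + d₁₂d₂₃d₃₁ = 0, has no integer solution (dᵢⱼ). -/
/-- The 19 facets of the Barnette sphere, as ordered 4-tuples of vertices
(`0,1,2,3` = `e₁,e₂,e₃,e₄` and `4,5,6,7` = `d₁,d₂,d₃,d₄`), each together with the sign of
the corresponding determinant prescribed by the orientation of the sphere
(Table 1 of the paper). -/
def barnetteFacets : List ((Fin 4 → Fin 8) × ℤ) :=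
  [(![0,1,2,3], 1), (![4,1,2,3], -1), (![0,5,2,3], -1), (![0,1,6,3], -1),
   (![0,1,2,7], -1), (![4,5,2,3], 1), (![0,5,6,3], 1), (![4,1,6,3], 1),
   (![0,5,2,6], 1), (![0,1,6,4], 1), (![4,1,2,5], 1), (![0,1,4,7], 1),
   (![0,6,2,7], 1), (![5,1,2,7], 1), (![0,4,6,7], 1), (![4,1,5,7], 1),
   (![6,5,2,7], 1), (![4,5,6,3], -1), (![4,5,6,7], 1)]

/-!
Write `v(dᵢ) = (dᵢ₁, dᵢ₂, dᵢ₃, dᵢ₄)`. The facet `e₁e₂e₃e₄` forces the global sign to be `+1`, and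
the other facets except `d₁d₂d₃d₄` are minors of the matrix `(dᵢⱼ)`: they give `dᵢᵢ = -1` and the
polynomial system of `barnette_system_unsolvable`. In that system, for each column `i ≤ 3` the
entries `dⱼᵢ`, `dₖᵢ` (`{i, j, k} = {1, 2, 3}`) cannot both vanish, as that would force both
`d₄ᵢ = 1` and `d₄ᵢ = -1`. Combined with `dᵢⱼ dⱼᵢ = 0`, the zeros propagate around the cycle
`1 → 2 → 3 → 1`, so exactly one of the products `d₁₂ d₂₃ d₃₁`, `d₁₃ d₃₂ d₂₁` vanishes, while their
sum must be `0`.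
-/

section BarnetteSystem

variable {R : Type*} [CommRing R]

theorem barnette_column_ne_zero (h2 : (2 : R) ≠ 0) {d₁₄ d₂₁ d₂₄ d₃₁ d₄₁ d₄₂ : R}
    (p₁₂ : d₂₄ + d₁₄ * d₂₁ = -1) (q₁₂ : d₂₁ + d₂₄ * d₄₁ = -1)
    (r₃₁₂ : d₃₁ - d₂₁ - d₄₁ - d₃₁ * d₂₄ * d₄₂ = 1) : d₂₁ ≠ 0 ∨ d₃₁ ≠ 0 := by
  by_contra! ⟨h₂₁, h₃₁⟩
  subst h₂₁ h₃₁
  exact h2 (by linear_combination q₁₂ - d₄₁ * p₁₂ - r₃₁₂)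

theorem barnette_system_unsolvable [NoZeroDivisors R] (h2 : (2 : R) ≠ 0)
    (d₁₂ d₁₃ d₁₄ d₂₁ d₂₃ d₂₄ d₃₁ d₃₂ d₃₄ d₄₁ d₄₂ d₄₃ : R)
    (z₁₂ : d₁₂ * d₂₁ = 0) (z₂₃ : d₂₃ * d₃₂ = 0) (z₃₁ : d₃₁ * d₁₃ = 0)
    (p₁₂ : d₂₄ + d₁₄ * d₂₁ = -1) (p₂₃ : d₃₄ + d₂₄ * d₃₂ = -1) (p₃₁ : d₁₄ + d₃₄ * d₁₃ = -1)
    (q₁₂ : d₂₁ + d₂₄ * d₄₁ = -1) (q₂₃ : d₃₂ + d₃₄ * d₄₂ = -1) (q₃₁ : d₁₃ + d₁₄ * d₄₃ = -1)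
    (r₁₂₃ : d₁₂ - d₃₂ - d₄₂ - d₁₂ * d₃₄ * d₄₃ = 1)
    (r₂₃₁ : d₂₃ - d₁₃ - d₄₃ - d₂₃ * d₁₄ * d₄₁ = 1)
    (r₃₁₂ : d₃₁ - d₂₁ - d₄₁ - d₃₁ * d₂₄ * d₄₂ = 1)
    (hcyc : d₁₃ * d₃₂ * d₂₁ + d₁₂ * d₂₃ * d₃₁ = 0) : False := by
  have c₁ := barnette_column_ne_zero h2 p₁₂ q₁₂ r₃₁₂
  have c₂ := barnette_column_ne_zero h2 p₂₃ q₂₃ r₁₂₃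
  have c₃ := barnette_column_ne_zero h2 p₃₁ q₃₁ r₂₃₁
  rcases mul_eq_zero.1 z₁₂ with h₁₂ | h₂₁ <;> rcases mul_eq_zero.1 z₂₃ with h₂₃ | h₃₂ <;>
    rcases mul_eq_zero.1 z₃₁ with h₃₁ | h₁₃ <;> simp_all

end BarnetteSystem

theorem exists_eq_of_castLE_eq_ite {R : Type*} [Zero R] [One R] {v : Fin 8 → Fin 4 → R}
    (he : ∀ i k : Fin 4, v (Fin.castLE (by norm_num) i) k = if i = k then 1 else 0) :
    ∃ d₁₁ d₁₂ d₁₃ d₁₄ d₂₁ d₂₂ d₂₃ d₂₄ d₃₁ d₃₂ d₃₃ d₃₄ d₄₁ d₄₂ d₄₃ d₄₄ : R,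
      v = ![![1, 0, 0, 0], ![0, 1, 0, 0], ![0, 0, 1, 0], ![0, 0, 0, 1],
        ![d₁₁, d₁₂, d₁₃, d₁₄], ![d₂₁, d₂₂, d₂₃, d₂₄], ![d₃₁, d₃₂, d₃₃, d₃₄], ![d₄₁, d₄₂, d₄₃, d₄₄]] := by
  refine ⟨v 4 0, v 4 1, v 4 2, v 4 3, v 5 0, v 5 1, v 5 2, v 5 3,
    v 6 0, v 6 1, v 6 2, v 6 3, v 7 0, v 7 1, v 7 2, v 7 3, funext fun i => funext fun k => ?_⟩
  fin_cases i
  · exact (he 0 k).trans (by fin_cases k <;> rfl)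
  · exact (he 1 k).trans (by fin_cases k <;> rfl)
  · exact (he 2 k).trans (by fin_cases k <;> rfl)
  · exact (he 3 k).trans (by fin_cases k <;> rfl)
  all_goals fin_cases k <;> rfl

/-- there is no assignment `v` of integer vectors in `ℤ⁴` to the 8 vertices of
the Barnette sphere with `v(eᵢ)` the `i`-th standard basis vector, such that every facet
`{p₁,p₂,p₃,p₄}` has `det[v(p₁),v(p₂),v(p₃),v(p₄)] = ±1` with determinants of facets sharing
a 2-face having opposite signs — equivalently (for a global sign `s = ±1`), such that each
facet's determinant equals `s` times the sign listed in Table 1.  Hence the Barnette sphere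
cannot be the underlying simplicial complex of a toric manifold. -/
theorem barnette_no_toric :
    ¬ ∃ (v : Fin 8 → Fin 4 → ℤ) (s : ℤ), (s = 1 ∨ s = -1) ∧
      (∀ i k : Fin 4, v (Fin.castLE (by norm_num) i) k = if i = k then 1 else 0) ∧
      ∀ p ∈ barnetteFacets,
        (Matrix.of fun r k : Fin 4 => v (p.1 r) k).det = s * p.2 := by
  rintro ⟨v, s, -, he, hf⟩
  obtain ⟨d₁₁, d₁₂, d₁₃, d₁₄, d₂₁, d₂₂, d₂₃, d₂₄, d₃₁, d₃₂, d₃₃, d₃₄, d₄₁, d₄₂, d₄₃, d₄₄, rfl⟩ :=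
    exists_eq_of_castLE_eq_ite he
  simp [barnetteFacets, Matrix.det_succ_row_zero, Fin.sum_univ_succ, Fin.succAbove] at hf
  obtain ⟨rfl, rfl, rfl, rfl, rfl, z₁₂, z₂₃, z₃₁, p₂₃, p₃₁, p₁₂, q₃₁, q₂₃, q₁₂, r₁₂₃, r₂₃₁, r₃₁₂,
    hcyc, -⟩ := hf
  exact barnette_system_unsolvable two_ne_zero d₁₂ d₁₃ d₁₄ d₂₁ d₂₃ d₂₄ d₃₁ d₃₂ d₃₄ d₄₁ d₄₂ d₄₃
    (by linear_combination -z₁₂) (by linear_combination -z₂₃) (by linear_combination -z₃₁)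
    (by linear_combination -p₁₂) (by linear_combination -p₂₃) (by linear_combination -p₃₁)
    (by linear_combination -q₁₂) (by linear_combination -q₂₃) (by linear_combination -q₃₁)
    (by linear_combination r₁₂₃ + d₃₂ * q₃₁ + d₄₂ * p₃₁)
    (by linear_combination r₂₃₁ + d₁₃ * q₁₂ + d₄₃ * p₁₂)
    (by linear_combination r₃₁₂ + d₂₁ * q₂₃ + d₄₁ * p₂₃)
    (by linear_combination hcyc + z₁₂ + z₂₃ + z₃₁)
end

section
/- The system consisting of: xᵢⱼxⱼᵢ = 0 for (i,j) ∈ {(1,2),(2,3),(3,1)}; yⱼ + zᵢxⱼᵢ = −1 and xⱼᵢ + yⱼwᵢ = −1 for (i,j) ∈ {(1,2),(2,3),(3,1)} (where yⱼ := dⱼ₄, zᵢ := dᵢ₄, wᵢ := d₄ᵢ); dᵢⱼ − dₖⱼ − d₄ⱼ − dᵢⱼdₖ₄d₄ₖ = 1 for (i,j,k) cyclic permutations of (1,2,3); and d₁₃d₃₂d₂₁ + d₁₂d₂₃d₃₁ = 0, implies that the number D of zeros among {d₂₁, d₃₂, d₁₃} satisfies D ∈ {1,2,3}, and each of the cases D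 = 3 and D ∈ {1,2} leads to a contradiction; hence the full system has no integer solution. -/
/-- Equations (2)–(6) from the Barnette sphere argument, for integers `d i j`
(`0`-indexed: indices `0,1,2,3` stand for `1,2,3,4`; the diagonal values `dᵢᵢ = −1` have
already been substituted, so only off-diagonal entries occur):
(2) `dᵢⱼdⱼᵢ = 0`, (3) `dⱼ₄ + dᵢ₄dⱼᵢ = −1`, (4) `dⱼᵢ + dⱼ₄d₄ᵢ = −1` for
`(i,j) ∈ {(1,2),(2,3),(3,1)}`; (5) `dᵢⱼ − dₖⱼ − d₄ⱼ − dᵢⱼdₖ₄d₄ₖ = 1` for `(i,j,k)` a cyclic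
permutation of `(1,2,3)`; (6) `d₁₃d₃₂d₂₁ + d₁₂d₂₃d₃₁ = 0`. -/
def barnetteSystem (d : Fin 4 → Fin 4 → ℤ) : Prop :=
  (∀ p ∈ ([((0 : Fin 4), (1 : Fin 4)), (1, 2), (2, 0)] : List (Fin 4 × Fin 4)),
      d p.1 p.2 * d p.2 p.1 = 0 ∧
      d p.2 3 + d p.1 3 * d p.2 p.1 = -1 ∧
      d p.2 p.1 + d p.2 3 * d 3 p.1 = -1) ∧
  (∀ t ∈ ([((0 : Fin 4), (1 : Fin 4), (2 : Fin 4)), (1, 2, 0), (2, 0, 1)] :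
      List (Fin 4 × Fin 4 × Fin 4)),
      d t.1 t.2.1 - d t.2.2 t.2.1 - d 3 t.2.1 - d t.1 t.2.1 * d t.2.2 3 * d 3 t.2.2 = 1) ∧
  d 0 2 * d 2 1 * d 1 0 + d 0 1 * d 1 2 * d 2 0 = 0

/-- `D` = the number of zeros among `d₂₁, d₃₂, d₁₃` (`0`-indexed: `d 1 0, d 2 1, d 0 2`). -/
def zeroCount (d : Fin 4 → Fin 4 → ℤ) : ℕ :=
  (if d 1 0 = 0 then 1 else 0) + (if d 2 1 = 0 then 1 else 0) + (if d 0 2 = 0 then 1 else 0)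

/-!
Call `d j i` and `d i j` the back and forward entries of the pair `(i, j)`. If a back entry
vanishes, (3) and (4) force `d j 3 = -1` and `d 3 i = 1`, and then (5) for the rotated triple
`(k, i, j)` reads `d k i * (1 + d 3 j) = 2`; so `d k i ≠ 0`, and (2) makes the back entry `d i k`
of the preceding pair vanish as well. Hence the back entries are all zero or all nonzero. If all
vanish, every `d 3 j` equals `1`, so (5) gives `d k i = 1` for all forward entries and (6) reads
`1 = 0`. If none vanishes, (2) kills the forward entries and (6) says the product of the back
entries is zero.
-/

def cyclicPairs : List (Fin 4 × Fin 4) := [(0, 1), (1, 2), (2, 0)]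

def cyclicTriples : List (Fin 4 × Fin 4 × Fin 4) := [(0, 1, 2), (1, 2, 0), (2, 0, 1)]

theorem mem_cyclicPairs_of_mem_cyclicTriples :
    ∀ {i j k : Fin 4}, (i, j, k) ∈ cyclicTriples → (i, j) ∈ cyclicPairs := by
  decide

theorem rotate_mem_cyclicTriples :
    ∀ {i j k : Fin 4}, (i, j, k) ∈ cyclicTriples → (k, i, j) ∈ cyclicTriples := by
  decide

namespace barnetteSystem

variable {d : Fin 4 → Fin 4 → ℤ} {i j k : Fin 4}

theorem of_back_eq_zero (h : barnetteSystem d) (hijk : (i, j, k) ∈ cyclicTriples)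
    (hback : d j i = 0) : d 3 i = 1 ∧ d k i * (1 + d 3 j) = 2 := by
  obtain ⟨-, h3, h4⟩ := h.1 _ (mem_cyclicPairs_of_mem_cyclicTriples hijk)
  have h5 := h.2.1 _ (rotate_mem_cyclicTriples hijk)
  simp only [hback, mul_zero, add_zero, zero_add] at h3 h4 h5
  have hd3i : d 3 i = 1 := by rw [h3] at h4; linarith
  refine ⟨hd3i, ?_⟩
  rw [h3, hd3i] at h5
  linarith

theorem back_eq_zero_of_back_eq_zero (h : barnetteSystem d) (hijk : (i, j, k) ∈ cyclicTriples)
    (hback : d j i = 0) : d i k = 0 := by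
  have hki : d k i ≠ 0 := by
    intro hki
    simpa [hki] using (h.of_back_eq_zero hijk hback).2
  have hmem := mem_cyclicPairs_of_mem_cyclicTriples (rotate_mem_cyclicTriples hijk)
  exact (mul_eq_zero.mp (h.1 _ hmem).1).resolve_left hki

theorem back_eq_zero_or_back_ne_zero (h : barnetteSystem d) :
    (d 1 0 = 0 ∧ d 2 1 = 0 ∧ d 0 2 = 0) ∨ (d 1 0 ≠ 0 ∧ d 2 1 ≠ 0 ∧ d 0 2 ≠ 0) := by
  have h10 : d 1 0 = 0 → d 0 2 = 0 := h.back_eq_zero_of_back_eq_zero (by decide)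
  have h21 : d 2 1 = 0 → d 1 0 = 0 := h.back_eq_zero_of_back_eq_zero (by decide)
  have h02 : d 0 2 = 0 → d 2 1 = 0 := h.back_eq_zero_of_back_eq_zero (by decide)
  tauto

theorem zeroCount_eq_zero_or_eq_three (h : barnetteSystem d) :
    zeroCount d = 0 ∨ zeroCount d = 3 := by
  rcases h.back_eq_zero_or_back_ne_zero with ⟨h10, h21, h02⟩ | ⟨h10, h21, h02⟩ <;>
    simp [zeroCount, h10, h21, h02]

theorem zeroCount_ne_zero (h : barnetteSystem d) : zeroCount d ≠ 0 := by
  intro hzero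
  have hback : d 1 0 ≠ 0 ∧ d 2 1 ≠ 0 ∧ d 0 2 ≠ 0 := by
    simpa [zeroCount, and_assoc] using hzero
  have hforward : d 0 1 = 0 ∧ d 1 2 = 0 ∧ d 2 0 = 0 := by
    refine ⟨?_, ?_, ?_⟩
    · exact (mul_eq_zero.mp (h.1 (0, 1) (by simp)).1).resolve_right hback.1
    · exact (mul_eq_zero.mp (h.1 (1, 2) (by simp)).1).resolve_right hback.2.1
    · exact (mul_eq_zero.mp (h.1 (2, 0) (by simp)).1).resolve_right hback.2.2
  refine mul_ne_zero (mul_ne_zero hback.2.2 hback.2.1) hback.1 ?_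
  simpa [hforward] using h.2.2

theorem zeroCount_ne_three (h : barnetteSystem d) : zeroCount d ≠ 3 := by
  intro hthree
  have hback : d 1 0 = 0 ∧ d 2 1 = 0 ∧ d 0 2 = 0 := by
    simp only [zeroCount] at hthree
    split_ifs at hthree <;> simp_all
  obtain ⟨h30, h20⟩ := h.of_back_eq_zero (i := 0) (j := 1) (k := 2) (by decide) hback.1
  obtain ⟨h31, h01⟩ := h.of_back_eq_zero (i := 1) (j := 2) (k := 0) (by decide) hback.2.1
  obtain ⟨h32, h12⟩ := h.of_back_eq_zero (i := 2) (j := 0) (k := 1) (by decide) hback.2.2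
  have hforward : d 0 1 = 1 ∧ d 1 2 = 1 ∧ d 2 0 = 1 := by
    rw [h32] at h01
    rw [h30] at h12
    rw [h31] at h20
    omega
  have h6 := h.2.2
  simp [hback, hforward] at h6

theorem zeroCount_eq_three (h : barnetteSystem d) : zeroCount d = 3 :=
  h.zeroCount_eq_zero_or_eq_three.resolve_left h.zeroCount_ne_zero

end barnetteSystem

/-- for any integer solution of the system (2)–(6), the number `D` of zeros
among `{d₂₁, d₃₂, d₁₃}` would satisfy `D ∈ {1,2,3}`, and each of the cases `D = 3` and
`D ∈ {1,2}` leads to a contradiction; hence the system has no integer solution. -/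
theorem barnette_system_no_solution :
    (∀ d : Fin 4 → Fin 4 → ℤ, barnetteSystem d →
      zeroCount d = 1 ∨ zeroCount d = 2 ∨ zeroCount d = 3) ∧
    (∀ d : Fin 4 → Fin 4 → ℤ, barnetteSystem d → zeroCount d ≠ 3) ∧
    (∀ d : Fin 4 → Fin 4 → ℤ, barnetteSystem d →
      ¬(zeroCount d = 1 ∨ zeroCount d = 2)) ∧
    ¬ ∃ d : Fin 4 → Fin 4 → ℤ, barnetteSystem d := by
  refine ⟨fun d h => Or.inr (Or.inr h.zeroCount_eq_three), fun d h => h.zeroCount_ne_three,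
    fun d h => ?_, fun ⟨d, h⟩ => h.zeroCount_ne_three h.zeroCount_eq_three⟩
  have := h.zeroCount_eq_three
  omega
end
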